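/- arXiv:2001.00251 — 4 statements merged into one kernel-verified Lean document; each statement's English description precedes it below -/
import Mathlib

section
/- Let G be an unweighted d-regular graph whose Laplacian is diagonalised by a dephased complex Hadamard matrix H, and suppose a column h_k (k > 1) of H has all entries in {1, −1, i, −i}, with L(G) h_k = λ_k h_k. Then λ_k is an even integer, and the partition of the vertex set into S = {u : h_k(u) ∈ {1, i}} and its complement is an equitable partition into two cells of size n/2 each, where every vertex of each cell has exactly λ_k/2 neighbours in the other cell and d − λ_k/2 neighbours in its own cell. -/
open Matrix Complex

/-- `H` is a complex Hadamard matrix: unimodular entries and `H Hᴴ = n I`. -/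
def IsCHadamard {I : Type*} [Fintype I] [DecidableEq I] (H : Matrix I I ℂ) : Prop :=
  (∀ i j, ‖H i j‖ = 1) ∧
    H * Hᴴ = (Fintype.card I : ℂ) • (1 : Matrix I I ℂ)

/-- `M` is diagonalised by `H`: every column of `H` is an eigenvector of `M`. -/
def DiagBy {I : Type*} [Fintype I] (M H : Matrix I I ℂ) : Prop :=
  ∀ j : I, ∃ μ : ℂ, M.mulVec (fun i => H i j) = μ • (fun i => H i j)

/-- The Laplacian of a weighted graph given by its weighted adjacency matrix. -/
def lapOf {n : ℕ} (A : Matrix (Fin n) (Fin n) ℝ) : Matrix (Fin n) (Fin n) ℝ :=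
  Matrix.diagonal (fun i => ∑ j, A i j) - A

/-- `H` is dephased: its first row and first column consist of ones. -/
def IsDephased {n : ℕ} [NeZero n] (H : Matrix (Fin n) (Fin n) ℂ) : Prop :=
  (∀ i, H i 0 = 1) ∧ (∀ j, H 0 j = 1)

/-! The real-linear functional `z ↦ re z + im z` sends the column `h = h_k` to the `±1` sign
vector `s` of `S`. The Laplacian is Hermitian, so `λ` is real, and it has integer entries, so
`L s = λ s`. For a `±1` vector, `(L s)_u = 2 c_u s_u` where `c_u` is the number of neighbours of
`u` on the other side of the cut; hence `λ = 2 c_u` for every vertex `u`. Finally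
`∑ s = re (∑ h) + im (∑ h) = 0` because `h` is orthogonal to the all-ones first column, which forces
`|S| = n / 2`. -/

open Finset

theorem Matrix.IsHermitian.conj_eq_self_of_mulVec_eq_smul {n 𝕜 : Type*} [Fintype n] [DecidableEq n]
    [RCLike 𝕜] {A : Matrix n n 𝕜} (hA : A.IsHermitian) {v : n → 𝕜} (hv : v ≠ 0) {μ : 𝕜}
    (h : A *ᵥ v = μ • v) : starRingEnd 𝕜 μ = μ := by
  refine (isSymmetric_toEuclideanLin_iff.mpr hA).conj_eigenvalue_eq_self
    (Module.End.hasEigenvalue_of_hasEigenvector (x := WithLp.toLp 2 v) ⟨?_, by simpa using hv⟩)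
  rw [Module.End.mem_eigenspace_iff, toLpLin_toLp]
  simp [h]

namespace IsCHadamard

variable {I : Type*} [Fintype I] [DecidableEq I] {H : Matrix I I ℂ}

theorem conjTranspose_mul_self (hH : IsCHadamard H) :
    Hᴴ * H = (Fintype.card I : ℂ) • (1 : Matrix I I ℂ) := by
  rcases isEmpty_or_nonempty I with hI | hI
  · exact Subsingleton.elim _ _
  have hcard : (Fintype.card I : ℂ) ≠ 0 := by simp
  have hinv : H * ((Fintype.card I : ℂ)⁻¹ • Hᴴ) = 1 := by
    rw [Matrix.mul_smul, hH.2, smul_smul, inv_mul_cancel₀ hcard, one_smul]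
  rw [← smul_inv_smul₀ hcard (Hᴴ * H), ← Matrix.smul_mul, mul_eq_one_comm.mp hinv]

theorem sum_col_eq_zero (hH : IsCHadamard H) {j₀ : I} (h₀ : ∀ i, H i j₀ = 1) {k : I}
    (hk : k ≠ j₀) : ∑ i, H i k = 0 := by
  simpa [Matrix.mul_apply, h₀, Matrix.one_apply, hk.symm] using
    congrFun (congrFun hH.conjTranspose_mul_self j₀) k

end IsCHadamard

section SignVec

variable {V : Type*}

def signVec {R : Type*} [One R] [Neg R] (p : V → Prop) [DecidablePred p] : V → R :=
  fun v => if p v then 1 else -1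

theorem sum_signVec [Fintype V] {R : Type*} [CommRing R] (p : V → Prop) [DecidablePred p] :
    ∑ v, (signVec p v : R) = 2 * #{v | p v} - Fintype.card V := by
  unfold signVec
  rw [sum_ite, ← card_univ, ← card_filter_add_card_filter_not (s := univ) p]
  simp only [sum_const, nsmul_eq_mul, mul_one, mul_neg, Nat.cast_add]
  ring

end SignVec

namespace SimpleGraph

variable {V : Type*} [Fintype V] (G : SimpleGraph V) [DecidableRel G.Adj]

theorem filter_adj_and_eq (u : V) (q : V → Prop) [DecidablePred q] :
    ({v | G.Adj u v ∧ q v} : Finset V) = {v ∈ G.neighborFinset u | q v} := by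
  rw [neighborFinset_eq_filter, filter_filter]

variable [DecidableEq V]

theorem lapMatrix_mulVec_comp {R S F : Type*} [NonAssocRing R] [NonAssocRing S] [FunLike F R S]
    [AddMonoidHomClass F R S] (f : F) (x : V → R) :
    G.lapMatrix S *ᵥ (f ∘ x) = f ∘ (G.lapMatrix R *ᵥ x) := by
  ext v
  simp only [lapMatrix_mulVec_apply, Function.comp_apply, map_sub, map_sum, ← nsmul_eq_mul,
    map_nsmul]

theorem lapMatrix_mulVec_signVec {R : Type*} [CommRing R] (p : V → Prop) [DecidablePred p]
    (u : V) : (G.lapMatrix R *ᵥ signVec p) u =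
      2 * #{v ∈ G.neighborFinset u | ¬(p v ↔ p u)} * signVec p u := by
  have hsame : ∀ v ∈ {v ∈ G.neighborFinset u | p v ↔ p u}, (signVec p v : R) = signVec p u :=
    fun v hv => by simp only [signVec, (mem_filter.mp hv).2]
  have hdiff : ∀ v ∈ {v ∈ G.neighborFinset u | ¬(p v ↔ p u)},
      (signVec p v : R) = -signVec p u := fun v hv => by
    have := (mem_filter.mp hv).2
    by_cases hu : p u <;> simp_all [signVec]
  rw [lapMatrix_mulVec_apply, ← card_neighborFinset_eq_degree,
    ← sum_filter_add_sum_filter_not _ (fun v => p v ↔ p u), sum_congr rfl hsame,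
    sum_congr rfl hdiff, ← card_filter_add_card_filter_not (fun v => p v ↔ p u)]
  simp only [sum_const, nsmul_eq_mul, Nat.cast_add]
  ring

theorem card_crossing_neighbors_eq {R : Type*} [CommRing R] [IsDomain R] {p : V → Prop}
    [DecidablePred p] {r : R} (h : G.lapMatrix R *ᵥ signVec p = r • signVec p) (u : V) :
    r = 2 * #{v ∈ G.neighborFinset u | ¬(p v ↔ p u)} := by
  have hu := G.lapMatrix_mulVec_signVec (R := R) p u
  rw [h, Pi.smul_apply, smul_eq_mul] at hu
  have hs : (signVec p u : R) ≠ 0 := by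
    unfold signVec; split_ifs <;> simp
  exact mul_right_cancel₀ hs hu

end SimpleGraph

theorem Complex.re_add_im_eq_ite {z : ℂ} (hz : z = 1 ∨ z = -1 ∨ z = I ∨ z = -I) :
    z.re + z.im = if z = 1 ∨ z = I then 1 else -1 := by
  rcases hz with rfl | rfl | rfl | rfl <;> simp [Complex.ext_iff]

theorem stmt9_general {n : ℕ} [NeZero n] (G : SimpleGraph (Fin n)) [DecidableRel G.Adj]
    (d : ℕ) (hreg : ∀ v, G.degree v = d)
    (H : Matrix (Fin n) (Fin n) ℂ) (hH : IsCHadamard H) (hd : IsDephased H)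
    (k : Fin n) (hk : k ≠ 0)
    (hvals : ∀ u, H u k = 1 ∨ H u k = -1 ∨ H u k = Complex.I ∨ H u k = -Complex.I)
    (lam : ℂ) (hlam : (G.lapMatrix ℂ).mulVec (fun u => H u k) = lam • (fun u => H u k)) :
    ∃ m : ℕ, lam = 2 * m ∧ m ≤ d ∧
      (Finset.univ.filter (fun u => H u k = 1 ∨ H u k = Complex.I)).card = n / 2 ∧
      (∀ u : Fin n,
        (Finset.univ.filter (fun v => G.Adj u v ∧
          ¬ ((v ∈ Finset.univ.filter (fun w => H w k = 1 ∨ H w k = Complex.I)) ↔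
             (u ∈ Finset.univ.filter (fun w => H w k = 1 ∨ H w k = Complex.I))))).card = m ∧
        (Finset.univ.filter (fun v => G.Adj u v ∧
          ((v ∈ Finset.univ.filter (fun w => H w k = 1 ∨ H w k = Complex.I)) ↔
           (u ∈ Finset.univ.filter (fun w => H w k = 1 ∨ H w k = Complex.I))))).card = d - m) := by
  set S := univ.filter (fun u => H u k = 1 ∨ H u k = Complex.I)
  set h : Fin n → ℂ := fun u => H u k
  let φ : ℂ →ₗ[ℝ] ℝ := Complex.reLm + Complex.imLm
  have hsign : φ ∘ h = signVec (· ∈ S) := funext fun u => by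
    simp only [Function.comp_apply, signVec, S, mem_filter, mem_univ, true_and]
    exact Complex.re_add_im_eq_ite (hvals u)
  have hreal : (lam.re : ℂ) = lam := by
    refine Complex.conj_eq_iff_re.mp ((G.isHermitian_lapMatrix ℂ).conj_eq_self_of_mulVec_eq_smul
      (fun hzero => ?_) hlam)
    simpa [h, hd.2 k] using congrFun hzero 0
  have hL : G.lapMatrix ℝ *ᵥ signVec (· ∈ S) = lam.re • signVec (· ∈ S) := by
    rw [← hsign, G.lapMatrix_mulVec_comp φ, hlam, ← hreal]
    ext u
    simp [φ, mul_add]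
  have hcross := G.card_crossing_neighbors_eq hL
  set c : Fin n → ℕ := fun u => #{v ∈ G.neighborFinset u | ¬(v ∈ S ↔ u ∈ S)}
  have hc : ∀ u, c u = c 0 := fun u => by
    exact_mod_cast (mul_right_inj' two_ne_zero).mp ((hcross u).symm.trans (hcross 0))
  have hS : 2 * #S = n := by
    have hsum := sum_signVec (R := ℝ) (· ∈ S)
    rw [← hsign, Fintype.card_fin, filter_mem_eq_inter, univ_inter] at hsum
    simp only [Function.comp_apply, ← map_sum, hH.sum_col_eq_zero hd.1 hk, map_zero, h] at hsum
    exact_mod_cast (sub_eq_zero.mp hsum.symm)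
  have hsame : ∀ u, #{v ∈ G.neighborFinset u | v ∈ S ↔ u ∈ S} + c u = d := fun u => by
    rw [card_filter_add_card_filter_not, G.card_neighborFinset_eq_degree, hreg]
  refine ⟨c 0, ?_, ?_, ?_, fun u => ⟨?_, ?_⟩⟩
  · rw [← hreal, hcross 0]
    push_cast
    rfl
  · have := hsame 0
    omega
  · omega
  · rw [G.filter_adj_and_eq]
    exact hc u
  · have := hsame u
    rw [hc u] at this
    rw [G.filter_adj_and_eq]
    omega

/-- If a `d`-regular graph `G` is diagonalised by a dephased complex Hadamard
matrix with a column `h_k` (k > 1) taking values in `{±1, ±i}` and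
`L(G) h_k = λ h_k`, then `λ = 2m` is an even integer and
`S = {u : h_k(u) ∈ {1, i}}` together with its complement forms an equitable
partition into two cells of size `n/2`, where each vertex has `m = λ/2`
neighbours in the opposite cell and `d − m` neighbours in its own cell. -/
theorem stmt9 {n : ℕ} [NeZero n] (G : SimpleGraph (Fin n)) [DecidableRel G.Adj]
    (d : ℕ) (hreg : ∀ v, G.degree v = d)
    (H : Matrix (Fin n) (Fin n) ℂ) (hH : IsCHadamard H) (hd : IsDephased H)
    (hdiag : DiagBy (G.lapMatrix ℂ) H)
    (k : Fin n) (hk : k ≠ 0)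
    (hvals : ∀ u, H u k = 1 ∨ H u k = -1 ∨ H u k = Complex.I ∨ H u k = -Complex.I)
    (lam : ℂ) (hlam : (G.lapMatrix ℂ).mulVec (fun u => H u k) = lam • (fun u => H u k)) :
    ∃ m : ℕ, lam = 2 * m ∧ m ≤ d ∧
      (Finset.univ.filter (fun u => H u k = 1 ∨ H u k = Complex.I)).card = n / 2 ∧
      (∀ u : Fin n,
        (Finset.univ.filter (fun v => G.Adj u v ∧
          ¬ ((v ∈ Finset.univ.filter (fun w => H w k = 1 ∨ H w k = Complex.I)) ↔
             (u ∈ Finset.univ.filter (fun w => H w k = 1 ∨ H w k = Complex.I))))).card = m ∧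
        (Finset.univ.filter (fun v => G.Adj u v ∧
          ((v ∈ Finset.univ.filter (fun w => H w k = 1 ∨ H w k = Complex.I)) ↔
           (u ∈ Finset.univ.filter (fun w => H w k = 1 ∨ H w k = Complex.I))))).card = d - m) :=
  stmt9_general G d hreg H hH hd k hk hvals lam hlam
end

section
/- Let k be a positive integer and G1,…,G_{2k+1} be unweighted connected graphs, each of order n. Then the Laplacian of the disjoint union G = G1 + ⋯ + G_{2k+1} is not diagonalisable by any Turyn Hadamard matrix (and not by any real Hadamard matrix). -/
/-! The kernel of the Laplacian of a disjoint union of `m` connected graphs consists of the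
vectors constant on each component, so for `m ≥ 2` it contains two linearly independent vectors,
and any invertible matrix of eigenvectors has two distinct columns with eigenvalue `0`. These
columns are constant on components, so their orthogonality says that `m` products
`conj a * b` of entries from `{±1, ±i}` sum to zero. Each product is again a fourth root of unity,
and fourth roots of unity can only sum to zero in even number, whereas `m = 2k+1` is odd. -/

open Matrix Complex

open Finset SimpleGraph
open scoped ComplexConjugate

lemma pow_four_eq_one_iff {z : ℂ} : z ^ 4 = 1 ↔ z = 1 ∨ z = -1 ∨ z = I ∨ z = -I := by
  constructor
  · intro h
    have : (z - 1) * (z + 1) * (z - I) * (z + I) = 0 := by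
      linear_combination h + (1 - z ^ 2) * I_sq
    simp only [mul_eq_zero, sub_eq_zero, add_eq_zero_iff_eq_neg] at this
    tauto
  · rintro (rfl | rfl | rfl | rfl) <;> norm_num [pow_succ, I_mul_I]

lemma conj_mul_pow_four_eq_one {a b : ℂ} (ha : a ^ 4 = 1) (hb : b ^ 4 = 1) :
    (conj a * b) ^ 4 = 1 := by
  rw [mul_pow, ← map_pow, ha, hb, map_one, one_mul]

lemma even_card_of_sum_eq_zero_of_pow_four_eq_one {ι : Type*} [Fintype ι] {t : ι → ℂ}
    (ht : ∀ i, t i ^ 4 = 1) (hsum : ∑ i, t i = 0) : Even (Fintype.card ι) := by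
  set s : ι → ℝ := fun i => (t i).re + (t i).im
  -- `re + im` is `±1` on fourth roots of unity, so the `+1`s and `-1`s must pair off.
  have hs : ∀ i, s i = 1 ∨ s i = -1 := fun i => by
    rcases pow_four_eq_one_iff.mp (ht i) with h | h | h | h <;> simp [s, h]
  have hs0 : ∑ i, s i = 0 := by
    simp [s, Finset.sum_add_distrib, ← re_sum, ← im_sum, hsum]
  have : (Fintype.card ι : ℝ) = 2 * #{i | s i = 1} :=
    calc (Fintype.card ι : ℝ) = ∑ i, (s i + 1) := by simp [Finset.sum_add_distrib, hs0]
      _ = ∑ i, if s i = 1 then 2 else 0 :=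
        Finset.sum_congr rfl fun i _ => by rcases hs i with h | h <;> norm_num [h]
      _ = 2 * #{i | s i = 1} := by rw [Finset.sum_ite, Finset.sum_const]; simp [mul_comm]
  exact ⟨_, by exact_mod_cast this.trans (two_mul _)⟩

section Eigenbasis

variable {K ι : Type*} [Field K] [Fintype ι] [DecidableEq ι]
  {L H : Matrix ι ι K} {μ : ι → K}

lemma mul_eq_mul_diagonal_of_mulVec_col
    (hμ : ∀ j, L *ᵥ (fun i => H i j) = μ j • fun i => H i j) :
    L * H = H * diagonal μ := by
  ext i j
  rw [Matrix.mul_diagonal, mul_comm]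
  exact congrFun (hμ j) i

lemma exists_mulVec_eq_of_mulVec_eq_zero (hH : IsUnit H)
    (hμ : ∀ j, L *ᵥ (fun i => H i j) = μ j • fun i => H i j) {v : ι → K}
    (hv : L *ᵥ v = 0) :
    ∃ c, H *ᵥ c = v ∧ ∀ j, μ j ≠ 0 → c j = 0 := by
  have hdet := (isUnit_iff_isUnit_det H).mp hH
  refine ⟨H⁻¹ *ᵥ v, by rw [mulVec_mulVec, mul_nonsing_inv _ hdet, one_mulVec],
    fun j hj => ?_⟩
  have hdiag : diagonal μ = H⁻¹ * L * H := by
    rw [Matrix.mul_assoc, mul_eq_mul_diagonal_of_mulVec_col hμ, ← Matrix.mul_assoc,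
      nonsing_inv_mul _ hdet, Matrix.one_mul]
  have : diagonal μ *ᵥ (H⁻¹ *ᵥ v) = 0 := by
    rw [hdiag, mulVec_mulVec, Matrix.mul_assoc, Matrix.mul_assoc, mul_nonsing_inv _ hdet,
      Matrix.mul_one, ← mulVec_mulVec, hv, mulVec_zero]
  simpa [mulVec_diagonal, hj] using congrFun this j

lemma exists_ne_eigenvalue_eq_zero (hH : IsUnit H)
    (hμ : ∀ j, L *ᵥ (fun i => H i j) = μ j • fun i => H i j) {v w : ι → K}
    (hvw : LinearIndependent K ![v, w]) (hv : L *ᵥ v = 0) (hw : L *ᵥ w = 0) :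
    ∃ j₁ j₂, j₁ ≠ j₂ ∧ μ j₁ = 0 ∧ μ j₂ = 0 := by
  by_contra! hμ₀
  obtain ⟨c, rfl, hc⟩ := exists_mulVec_eq_of_mulVec_eq_zero hH hμ hv
  obtain ⟨d, rfl, hd⟩ := exists_mulVec_eq_of_mulVec_eq_zero hH hμ hw
  suffices c = 0 by simpa [this] using hvw.ne_zero 0
  by_cases h : ∃ j₀, μ j₀ = 0
  · obtain ⟨j₀, hj₀⟩ := h
    have hsupp : ∀ j, j ≠ j₀ → c j = 0 ∧ d j = 0 := fun j hj =>
      ⟨hc j (hμ₀ j₀ j (Ne.symm hj) hj₀), hd j (hμ₀ j₀ j (Ne.symm hj) hj₀)⟩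
    have hcomb : d j₀ • (H *ᵥ c) + (-c j₀) • (H *ᵥ d) = 0 := by
      rw [← mulVec_smul, ← mulVec_smul, ← mulVec_add]
      convert mulVec_zero H
      ext j
      by_cases hj : j = j₀
      · subst hj
        simp only [Pi.add_apply, Pi.smul_apply, smul_eq_mul, Pi.zero_apply]
        ring
      · simp [hsupp j hj]
    have hc₀ := neg_eq_zero.mp (LinearIndependent.pair_iff.mp hvw _ _ hcomb).2
    ext j
    by_cases hj : j = j₀
    · rwa [hj]
    · exact (hsupp j hj).1
  · push Not at h
    exact funext fun j => hc j (h j)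

end Eigenbasis

section Hadamard

variable {I : Type*} [Fintype I] [DecidableEq I] {H : Matrix I I ℂ}

lemma IsCHadamard.mul_inv_card_smul_conjTranspose (hH : IsCHadamard H) :
    H * ((Fintype.card I : ℂ)⁻¹ • Hᴴ) = 1 := by
  cases isEmpty_or_nonempty I
  · exact Subsingleton.elim _ _
  have hN : (Fintype.card I : ℂ) ≠ 0 := Nat.cast_ne_zero.mpr Fintype.card_ne_zero
  rw [Matrix.mul_smul, hH.2, smul_smul, inv_mul_cancel₀ hN, one_smul]

lemma IsCHadamard.isUnit (hH : IsCHadamard H) : IsUnit H :=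
  (isUnit_iff_isUnit_det H).mpr (isUnit_det_of_right_inverse hH.mul_inv_card_smul_conjTranspose)

lemma IsCHadamard.sum_conj_mul_eq_zero (hH : IsCHadamard H) {j₁ j₂ : I} (hj : j₁ ≠ j₂) :
    ∑ i, conj (H i j₁) * H i j₂ = 0 := by
  have h : ((Fintype.card I : ℂ)⁻¹ • Hᴴ) * H = 1 :=
    mul_eq_one_comm.mp hH.mul_inv_card_smul_conjTranspose
  have := congrFun (congrFun h j₁) j₂
  simp only [mul_apply, Matrix.smul_apply, conjTranspose_apply, RCLike.star_def, smul_eq_mul,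
    mul_assoc, ← mul_sum, one_apply_ne hj, mul_eq_zero, inv_eq_zero, Nat.cast_eq_zero] at this
  exact this.resolve_left (Fintype.card_pos_iff.mpr ⟨j₁⟩).ne'

end Hadamard

lemma lapMatrix_complex_mulVec_eq_zero_iff_forall_reachable {V : Type*} [Fintype V] [DecidableEq V]
    (G : SimpleGraph V) [DecidableRel G.Adj] (x : V → ℂ) :
    G.lapMatrix ℂ *ᵥ x = 0 ↔ ∀ i j, G.Reachable i j → x i = x j := by
  have hre : ∀ v, ((G.lapMatrix ℂ *ᵥ x) v).re = (G.lapMatrix ℝ *ᵥ fun u => (x u).re) v :=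
    fun v => by simp [lapMatrix_mulVec_apply]
  have him : ∀ v, ((G.lapMatrix ℂ *ᵥ x) v).im = (G.lapMatrix ℝ *ᵥ fun u => (x u).im) v :=
    fun v => by simp [lapMatrix_mulVec_apply]
  calc G.lapMatrix ℂ *ᵥ x = 0 ↔ (G.lapMatrix ℝ *ᵥ fun u => (x u).re) = 0 ∧
        (G.lapMatrix ℝ *ᵥ fun u => (x u).im) = 0 := by
        simp only [funext_iff, Complex.ext_iff, hre, him, Pi.zero_apply, zero_re, zero_im,
          forall_and]
    _ ↔ _ := by
        simp only [lapMatrix_mulVec_eq_zero_iff_forall_reachable, Complex.ext_iff, ← forall_and]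

lemma reachable_iff_fst_eq {ι V : Type*} {G : ι → SimpleGraph V} {Gbig : SimpleGraph (ι × V)}
    (hconn : ∀ i, (G i).Connected)
    (hbig : ∀ p q, Gbig.Adj p q ↔ p.1 = q.1 ∧ (G p.1).Adj p.2 q.2) {p q : ι × V} :
    Gbig.Reachable p q ↔ p.1 = q.1 := by
  constructor
  · rintro ⟨w⟩
    induction w with
    | nil => rfl
    | cons h _ ih => exact ((hbig _ _).mp h).1.trans ih
  · obtain ⟨i, x⟩ := p
    obtain ⟨j, y⟩ := q
    rintro (rfl : i = j)
    exact ((hconn i).preconnected x y).map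
      ⟨fun z => (i, z), fun h => (hbig _ _).mpr ⟨rfl, h⟩⟩

lemma linearIndependent_pair_indicator_fst {K ι V : Type*} [Ring K] [DecidableEq ι] [Nonempty V]
    {i i' : ι} (hi : i ≠ i') :
    LinearIndependent K ![fun p : ι × V => if p.1 = i then (1 : K) else 0,
      fun p => if p.1 = i' then 1 else 0] := by
  obtain ⟨x⟩ := ‹Nonempty V›
  refine LinearIndependent.pair_iff.mpr fun s t hst => ⟨?_, ?_⟩
  · simpa [hi] using congrFun hst (i, x)
  · simpa [hi.symm] using congrFun hst (i', x)

lemma sum_prod_eq_card_smul_of_eq_fst {α ι V : Type*} [AddCommMonoid α] [Fintype ι] [Fintype V]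
    {f : ι × V → α} (x₀ : V) (hf : ∀ p, f p = f (p.1, x₀)) :
    ∑ p, f p = Fintype.card V • ∑ i, f (i, x₀) := by
  rw [Fintype.sum_prod_type, Finset.smul_sum]
  exact Finset.sum_congr rfl fun i _ =>
    (Finset.sum_congr rfl fun x _ => hf (i, x)).trans (by simp)

/-- The disjoint union of an odd number `2k+1` of connected graphs of common
order `n` is not diagonalisable by any Turyn Hadamard matrix (in particular,
not by any real Hadamard matrix): no complex Hadamard matrix with entries in
`{±1, ±i}` diagonalises its Laplacian. -/
theorem stmt11 {k n : ℕ} (hk : 1 ≤ k)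
    (G : Fin (2 * k + 1) → SimpleGraph (Fin n))
    (hconn : ∀ i, (G i).Connected)
    (Gbig : SimpleGraph (Fin (2 * k + 1) × Fin n)) [DecidableRel Gbig.Adj]
    (hbig : ∀ p q : Fin (2 * k + 1) × Fin n,
      Gbig.Adj p q ↔ p.1 = q.1 ∧ (G p.1).Adj p.2 q.2) :
    ¬ ∃ H : Matrix (Fin (2 * k + 1) × Fin n) (Fin (2 * k + 1) × Fin n) ℂ,
        (∀ i j, H i j = 1 ∨ H i j = -1 ∨ H i j = Complex.I ∨ H i j = -Complex.I) ∧
        IsCHadamard H ∧ DiagBy (Gbig.lapMatrix ℂ) H := by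
  rintro ⟨H, hent, hH, hdiag⟩
  choose μ hμ using hdiag
  obtain ⟨x₀⟩ : Nonempty (Fin n) := (hconn 0).nonempty
  have : Nonempty (Fin n) := ⟨x₀⟩
  have hker : ∀ v : Fin (2 * k + 1) × Fin n → ℂ,
      Gbig.lapMatrix ℂ *ᵥ v = 0 ↔ ∀ p q, p.1 = q.1 → v p = v q := fun v => by
    simp_rw [lapMatrix_complex_mulVec_eq_zero_iff_forall_reachable,
      reachable_iff_fst_eq hconn hbig]
  let χ : Fin (2 * k + 1) → Fin (2 * k + 1) × Fin n → ℂ :=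
    fun i p => if p.1 = i then 1 else 0
  have hχ : ∀ i, Gbig.lapMatrix ℂ *ᵥ χ i = 0 :=
    fun i => (hker _).mpr fun p q h => by simp [χ, h]
  have h01 : (0 : Fin (2 * k + 1)) ≠ ⟨1, by omega⟩ := by simp [Fin.ext_iff]
  obtain ⟨j₁, j₂, hj, hμ₁, hμ₂⟩ := exists_ne_eigenvalue_eq_zero hH.isUnit hμ
    (linearIndependent_pair_indicator_fst h01) (hχ _) (hχ _)
  have hconst : ∀ j, μ j = 0 → ∀ p, H p j = H (p.1, x₀) j := fun j hj p =>
    (hker _).mp (by simpa [hj] using hμ j) p (p.1, x₀) rfl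
  have hsum : ∑ i, conj (H (i, x₀) j₁) * H (i, x₀) j₂ = 0 := by
    have := hH.sum_conj_mul_eq_zero hj
    rw [sum_prod_eq_card_smul_of_eq_fst x₀
      fun p => by rw [hconst j₁ hμ₁ p, hconst j₂ hμ₂ p], nsmul_eq_mul] at this
    exact (mul_eq_zero.mp this).resolve_left (Nat.cast_ne_zero.mpr Fintype.card_ne_zero)
  have heven := even_card_of_sum_eq_zero_of_pow_four_eq_one
    (fun i => conj_mul_pow_four_eq_one (pow_four_eq_one_iff.mpr (hent _ _))
      (pow_four_eq_one_iff.mpr (hent _ _))) hsum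
  rw [Fintype.card_fin] at heven
  exact Nat.not_even_two_mul_add_one k heven
end

section
/- Let G be an integer-weighted graph on n vertices whose Laplacian is diagonalised by a Butson Hadamard matrix H ∈ H(p, n) for a prime p. If λ is a non-zero integer eigenvalue of L(G), then p divides λ and λ has multiplicity at least p − 1 as an eigenvalue of L(G). -/
/-!
The eigenvalue `λ` of `L` is the eigenvalue of some column `h` of the invertible matrix `H`.
Write `h = ∑ₘ ζ^m yₘ` with `ζ = e^{2πi/p}` and `yₘ` the indicator vector of `{i | hᵢ = ζ^m}`
(`levelIndicator`). The integer vectors `wₘ = L yₘ - λ yₘ` (`levelDefect`) satisfy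
`∑ₘ ζ^m wₘ = 0`, and the only rational relation among `1, ζ, …, ζ^(p-1)` is
`1 + ζ + ⋯ + ζ^(p-1) = 0`, so all `wₘ` coincide. Since `∑ₘ yₘ = 𝟙` and `L 𝟙 = 0`, their common
value `w` satisfies `p w = -λ 𝟙`; hence `p ∣ λ`, and `w ≠ 0`, so no `yₘ` vanishes. The `p`
vectors `yₘ` are therefore linearly independent, and their differences are `λ`-eigenvectors.
-/

open Matrix Complex

/-- The Laplacian of an integer-weighted graph. -/
def lapOfInt {n : ℕ} (A : Matrix (Fin n) (Fin n) ℤ) : Matrix (Fin n) (Fin n) ℤ :=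
  Matrix.diagonal (fun i => ∑ j, A i j) - A

open Matrix Module

theorem IsCHadamard.isUnit_det {ι : Type*} [Fintype ι] [DecidableEq ι] {H : Matrix ι ι ℂ}
    (hH : IsCHadamard H) : IsUnit H.det := by
  cases isEmpty_or_nonempty ι
  · simp [Matrix.det_isEmpty]
  · refine Matrix.isUnit_det_of_right_inverse (B := (Fintype.card ι : ℂ)⁻¹ • Hᴴ) ?_
    rw [Matrix.mul_smul, hH.2, smul_smul, inv_mul_cancel₀ (by simp), one_smul]

theorem Matrix.exists_eq_of_mulVec_eq_smul_of_cols {K ι : Type*} [Field K] [Fintype ι]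
    [DecidableEq ι] {M H : Matrix ι ι K} (hH : IsUnit H.det) {μ : ι → K}
    (hμ : ∀ j, M *ᵥ (fun i => H i j) = μ j • fun i => H i j) {v : ι → K} (hv : v ≠ 0)
    {c : K} (hMv : M *ᵥ v = c • v) : ∃ j, μ j = c := by
  have hMH : M * H = H * diagonal μ := by
    ext i j
    rw [mul_diagonal, mul_apply]
    simpa [Matrix.mulVec, dotProduct, mul_comm (H i j)] using congrFun (hμ j) i
  set a := H⁻¹ *ᵥ v
  have hHa : H *ᵥ a = v := by simp [a, mulVec_mulVec, mul_nonsing_inv H hH]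
  have ha : diagonal μ *ᵥ a = c • a := by
    refine mulVec_injective_iff_isUnit.mpr ((isUnit_iff_isUnit_det H).mpr hH) ?_
    rw [mulVec_mulVec, ← hMH, ← mulVec_mulVec, hHa, hMv, mulVec_smul, hHa]
  obtain ⟨j, hj⟩ : ∃ j, a j ≠ 0 := by
    by_contra! h
    exact hv (by rw [← hHa, show a = 0 from funext h, mulVec_zero])
  refine ⟨j, mul_right_cancel₀ hj ?_⟩
  simpa [mulVec_diagonal] using congrFun ha j

theorem Matrix.intCast_mulVec_apply {ι K : Type*} [Fintype ι] [Ring K] (L : Matrix ι ι ℤ)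
    (v : ι → ℤ) (i : ι) :
    (((L *ᵥ v) i : ℤ) : K) = (L.map Int.cast *ᵥ fun j => (v j : K)) i :=
  (Int.castRingHom K).map_mulVec L v i

theorem Submodule.card_sub_one_le_finrank_of_sub_mem {K V ι : Type*} [Field K] [AddCommGroup V]
    [Module K V] [FiniteDimensional K V] [Fintype ι] {v : ι → V} (hv : LinearIndependent K v)
    {E : Submodule K V} (hE : ∀ m m', v m - v m' ∈ E) : Fintype.card ι - 1 ≤ finrank K E := by
  cases isEmpty_or_nonempty ι
  · simp
  obtain ⟨m₀⟩ := ‹Nonempty ι›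
  have hspan : Submodule.span K (Set.range v) ≤ E ⊔ K ∙ v m₀ := by
    refine Submodule.span_le.mpr (Set.range_subset_iff.mpr fun m => ?_)
    simpa using Submodule.add_mem_sup (hE m m₀) (Submodule.mem_span_singleton_self (v m₀))
  have := (Submodule.finrank_mono hspan).trans
    (Submodule.finrank_add_le_finrank_add_finrank _ _)
  rw [finrank_span_eq_card hv, finrank_span_singleton (hv.ne_zero m₀)] at this
  omega

theorem IsPrimitiveRoot.eq_of_sum_mul_pow_eq_zero {K : Type*} [Field K] [CharZero K] {p : ℕ}
    (hp : p.Prime) {ζ : K} (hζ : IsPrimitiveRoot ζ p) {c : Fin p → ℚ}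
    (hc : ∑ m, (c m : K) * ζ ^ (m : ℕ) = 0) (m m' : Fin p) : c m = c m' := by
  obtain ⟨q, rfl⟩ : ∃ q, p = q + 1 := ⟨p - 1, (Nat.sub_add_cancel hp.one_le).symm⟩
  have hdeg : (minpoly ℚ ζ).natDegree = q := by
    rw [← Polynomial.cyclotomic_eq_minpoly_rat hζ q.succ_pos, Polynomial.natDegree_cyclotomic,
      Nat.totient_prime hp, Nat.add_sub_cancel]
  have hind : LinearIndependent ℚ fun i : Fin q => ζ ^ (i : ℕ) := by
    have h := linearIndependent_pow (K := ℚ) ζ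
    rwa [hdeg] at h
  have hgeom : ∑ m : Fin (q + 1), ζ ^ (m : ℕ) = 0 := by
    rw [Fin.sum_univ_eq_sum_range (ζ ^ ·)]
    exact hζ.geom_sum_eq_zero (by have := hp.two_le; omega)
  simp only [Fin.sum_univ_castSucc, Fin.val_castSucc, Fin.val_last] at hc hgeom
  -- subtract `c (last q)` times `1 + ζ + ⋯ + ζ ^ q = 0`
  have hlow : ∑ i : Fin q, (c i.castSucc - c (Fin.last q)) • ζ ^ (i : ℕ) = 0 := by
    simp only [Rat.smul_def, Rat.cast_sub, sub_mul, Finset.sum_sub_distrib, ← Finset.mul_sum]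
    linear_combination hc - (c (Fin.last q) : K) * hgeom
  have hlast : ∀ m, c m = c (Fin.last q) := by
    refine Fin.lastCases rfl fun i => ?_
    exact sub_eq_zero.mp (Fintype.linearIndependent_iff.mp hind _ hlow i)
  rw [hlast m, hlast m']

section LevelSets

variable {ι K : Type*} [Field K] {p : ℕ}

def levelIndicator (R : Type*) [Zero R] [One R] (k : ι → Fin p) (m : Fin p) : ι → R :=
  fun i => if k i = m then 1 else 0

def levelDefect [Fintype ι] (L : Matrix ι ι ℤ) (lam : ℤ) (k : ι → Fin p) (m : Fin p) :
    ι → ℤ :=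
  L *ᵥ levelIndicator ℤ k m - lam • levelIndicator ℤ k m

@[simp]
theorem intCast_levelIndicator (k : ι → Fin p) (m : Fin p) (i : ι) :
    ((levelIndicator ℤ k m i : ℤ) : K) = levelIndicator K k m i := by
  simp [levelIndicator, apply_ite]

theorem sum_levelIndicator (k : ι → Fin p) : ∑ m, levelIndicator ℤ k m = 1 := by
  ext i
  simp [levelIndicator]

theorem sum_pow_smul_levelIndicator (ζ : K) (k : ι → Fin p) :
    ∑ m : Fin p, ζ ^ (m : ℕ) • levelIndicator K k m = fun i => ζ ^ (k i : ℕ) := by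
  ext i
  simp [levelIndicator]

theorem linearIndependent_levelIndicator {k : ι → Fin p} (hk : Function.Surjective k) :
    LinearIndependent K (levelIndicator K k) := by
  refine Fintype.linearIndependent_iff.mpr fun g hg m => ?_
  obtain ⟨i, rfl⟩ := hk m
  simpa [levelIndicator] using congrFun hg i

theorem intCast_levelDefect_apply [Fintype ι] (L : Matrix ι ι ℤ) (lam : ℤ) (k : ι → Fin p)
    (m : Fin p) (i : ι) :
    (levelDefect L lam k m i : K) =
      (L.map Int.cast *ᵥ levelIndicator K k m - (lam : K) • levelIndicator K k m) i := by
  simp [levelDefect, intCast_mulVec_apply]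

theorem natCast_mul_levelDefect_apply [Fintype ι] [CharZero K] (hp : p.Prime)
    {L : Matrix ι ι ℤ} (hL : ∀ i, ∑ j, L i j = 0) {ζ : K} (hζ : IsPrimitiveRoot ζ p) {lam : ℤ}
    {k : ι → Fin p}
    (heig : L.map Int.cast *ᵥ (fun i => ζ ^ (k i : ℕ)) = (lam : K) • fun i => ζ ^ (k i : ℕ))
    (m : Fin p) (i : ι) : (p : ℤ) * levelDefect L lam k m i = -lam := by
  have hrel : ∑ m, (levelDefect L lam k m i : K) * ζ ^ (m : ℕ) = 0 := by
    calc ∑ m, (levelDefect L lam k m i : K) * ζ ^ (m : ℕ)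
        = ∑ m : Fin p, (L.map Int.cast *ᵥ ζ ^ (m : ℕ) • levelIndicator K k m -
            (lam : K) • ζ ^ (m : ℕ) • levelIndicator K k m) i := by
          refine Finset.sum_congr rfl fun m _ => ?_
          simp only [intCast_levelDefect_apply, mulVec_smul, Pi.sub_apply, Pi.smul_apply,
            smul_eq_mul]
          ring
      _ = (L.map Int.cast *ᵥ (fun i => ζ ^ (k i : ℕ)) -
            (lam : K) • fun i => ζ ^ (k i : ℕ)) i := by
          rw [← sum_pow_smul_levelIndicator ζ k, mulVec_sum, Finset.smul_sum,
            ← Finset.sum_sub_distrib, Finset.sum_apply]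
      _ = 0 := by rw [heig, sub_self, Pi.zero_apply]
  have hconst : ∀ m', levelDefect L lam k m' i = levelDefect L lam k m i := fun m' => by
    exact_mod_cast hζ.eq_of_sum_mul_pow_eq_zero hp (c := fun m => (levelDefect L lam k m i : ℚ))
      (by simpa using hrel) m' m
  have hsum : ∑ m', levelDefect L lam k m' i = -lam := by
    simp only [levelDefect, ← Finset.sum_apply, Finset.sum_sub_distrib, ← mulVec_sum,
      ← Finset.smul_sum, sum_levelIndicator]
    simp [mulVec, dotProduct, hL]
  rw [← hsum, Finset.sum_congr rfl fun m' _ => hconst m', Finset.sum_const, Finset.card_univ,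
    Fintype.card_fin, nsmul_eq_mul]

theorem surjective_of_natCast_mul_levelDefect [Fintype ι] [Nonempty ι] {L : Matrix ι ι ℤ}
    {lam : ℤ} (hlam : lam ≠ 0) {k : ι → Fin p}
    (hdef : ∀ m i, (p : ℤ) * levelDefect L lam k m i = -lam) : Function.Surjective k := by
  intro m
  by_contra! hm
  have hzero : levelIndicator ℤ k m = 0 := funext fun i => if_neg (hm i)
  obtain ⟨i⟩ := ‹Nonempty ι›
  exact hlam (by simpa [levelDefect, hzero] using (hdef m i).symm)

theorem levelIndicator_sub_mem_eigenspace [Fintype ι] [DecidableEq ι] (hp : p ≠ 0)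
    {L : Matrix ι ι ℤ} {lam : ℤ} {k : ι → Fin p}
    (hdef : ∀ m i, (p : ℤ) * levelDefect L lam k m i = -lam) (m m' : Fin p) :
    levelIndicator K k m - levelIndicator K k m' ∈
      Module.End.eigenspace (toLin' (L.map Int.cast)) (lam : K) := by
  have hdef_eq : ∀ i, levelDefect L lam k m i = levelDefect L lam k m' i := fun i =>
    mul_left_cancel₀ (Nat.cast_ne_zero.mpr hp) ((hdef m i).trans (hdef m' i).symm)
  rw [Module.End.mem_eigenspace_iff, toLin'_apply, mulVec_sub, smul_sub,
    sub_eq_sub_iff_sub_eq_sub]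
  ext i
  simpa [intCast_levelDefect_apply] using congrArg (Int.cast : ℤ → K) (hdef_eq i)

theorem dvd_and_le_finrank_eigenspace_of_pow_eq_one [Fintype ι] [DecidableEq ι] [Nonempty ι]
    [CharZero K] (hp : p.Prime) {L : Matrix ι ι ℤ} (hL : ∀ i, ∑ j, L i j = 0) {ζ : K}
    (hζ : IsPrimitiveRoot ζ p) {lam : ℤ} (hlam : lam ≠ 0) {h : ι → K} (hh : ∀ i, h i ^ p = 1)
    (heig : L.map Int.cast *ᵥ h = (lam : K) • h) :
    (p : ℤ) ∣ lam ∧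
      p - 1 ≤ finrank K (Module.End.eigenspace (toLin' (L.map Int.cast)) (lam : K)) := by
  have : NeZero p := ⟨hp.ne_zero⟩
  -- write `h i = ζ ^ k i` with `k i < p`
  choose k hk hkh using fun i => hζ.eq_pow_of_pow_eq_one (hh i)
  obtain rfl : (fun i => ζ ^ ((⟨k i, hk i⟩ : Fin p) : ℕ)) = h := funext hkh
  have hdef := natCast_mul_levelDefect_apply hp hL hζ heig
  obtain ⟨i⟩ := ‹Nonempty ι›
  refine ⟨dvd_neg.mp (Dvd.intro _ (hdef ⟨0, hp.pos⟩ i)), ?_⟩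
  have hsurj := surjective_of_natCast_mul_levelDefect hlam hdef
  have key := Submodule.card_sub_one_le_finrank_of_sub_mem
    (linearIndependent_levelIndicator (K := K) hsurj)
    (levelIndicator_sub_mem_eigenspace hp.ne_zero hdef)
  rwa [Fintype.card_fin] at key

end LevelSets

theorem sum_lapOfInt_apply {n : ℕ} (A : Matrix (Fin n) (Fin n) ℤ) (i : Fin n) :
    ∑ j, lapOfInt A i j = 0 := by
  simp [lapOfInt, Matrix.sub_apply, Finset.sum_sub_distrib, diagonal_apply]

theorem stmt15_general {n p : ℕ} (hp : p.Prime) (A : Matrix (Fin n) (Fin n) ℤ)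
    (H : Matrix (Fin n) (Fin n) ℂ) (hH : IsCHadamard H)
    (hroot : ∀ i j, (H i j) ^ p = 1)
    (hdiagby : DiagBy ((lapOfInt A).map (Int.cast : ℤ → ℂ)) H)
    (lam : ℤ) (hlam : lam ≠ 0)
    (heig : ∃ v : Fin n → ℂ, v ≠ 0 ∧
      ((lapOfInt A).map (Int.cast : ℤ → ℂ)).mulVec v = (lam : ℂ) • v) :
    (p : ℤ) ∣ lam ∧
      p - 1 ≤ Module.finrank ℂ
        ↥(Module.End.eigenspace
            (Matrix.toLin' ((lapOfInt A).map (Int.cast : ℤ → ℂ))) (lam : ℂ)) := by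
  obtain ⟨v, hv, hLv⟩ := heig
  choose μ hμ using hdiagby
  obtain ⟨j, hj⟩ := exists_eq_of_mulVec_eq_smul_of_cols hH.isUnit_det hμ hv hLv
  have : Nonempty (Fin n) := ⟨j⟩
  refine dvd_and_le_finrank_eigenspace_of_pow_eq_one hp (sum_lapOfInt_apply A)
    (Complex.isPrimitiveRoot_exp p hp.ne_zero) hlam (fun i => hroot i j) ?_
  rw [← hj]
  exact hμ j

/-- If the Laplacian of an integer-weighted graph on `n` vertices is
diagonalised by a Butson Hadamard matrix in `H(p, n)` with `p` prime, then any
non-zero integer eigenvalue `λ` is divisible by `p` and has multiplicity at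
least `p − 1` (its eigenspace has dimension at least `p − 1`). -/
theorem stmt15 {n p : ℕ} (hp : p.Prime) (A : Matrix (Fin n) (Fin n) ℤ)
    (hsymm : A.IsSymm) (hdiag : ∀ i, A i i = 0)
    (H : Matrix (Fin n) (Fin n) ℂ) (hH : IsCHadamard H)
    (hroot : ∀ i j, (H i j) ^ p = 1)
    (hdiagby : DiagBy ((lapOfInt A).map (Int.cast : ℤ → ℂ)) H)
    (lam : ℤ) (hlam : lam ≠ 0)
    (heig : ∃ v : Fin n → ℂ, v ≠ 0 ∧
      ((lapOfInt A).map (Int.cast : ℤ → ℂ)).mulVec v = (lam : ℂ) • v) :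
    (p : ℤ) ∣ lam ∧
      p - 1 ≤ Module.finrank ℂ
        ↥(Module.End.eigenspace
            (Matrix.toLin' ((lapOfInt A).map (Int.cast : ℤ → ℂ))) (lam : ℂ)) :=
  stmt15_general hp A H hH hroot hdiagby lam hlam heig
end

section
/- Let G1 and G2 be graphs on the same vertex set whose Laplacians are diagonalised by the same dephased complex Hadamard matrix H of order n, with L(G1) h_j = λ_j h_j, L(G2) h_j = μ_j h_j, and let d2 be the degree of the regular graph G2. Then the double cover G1 ⋉ G2, with Laplacian [[L(G1)+d2 I, −A(G2)],[−A(G2), L(G1)+d2 I]], has (e^{iγ} cos γ, −i e^{iγ} sin γ)-Laplacian fractional revival from (a,0) to (a,1) at time τ if and only if γ ≡ −d2 τ (mod π) and τ(λ_j + μ_j) ≡ τ(λ_j − μ_j) ≡ 0 (mod 2π) for all j. -/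
open Matrix Complex

section Diagonalisation

variable {ι R : Type*} [Fintype ι] [DecidableEq ι]

lemma mul_eq_mul_diagonal_of_mulVec_col_s18 [CommSemiring R] {M H : Matrix ι ι R} {d : ι → R}
    (h : ∀ j, M *ᵥ (fun i => H i j) = d j • fun i => H i j) : M * H = H * diagonal d := by
  ext i j
  rw [mul_diagonal, mul_apply]
  simpa [mulVec, dotProduct, mul_comm] using congrFun (h j) i

lemma add_smul_one_mul_eq_mul_diagonal [CommSemiring R] {M H : Matrix ι ι R} {d : ι → R}
    (h : M * H = H * diagonal d) (c : R) :
    (M + c • 1) * H = H * diagonal fun j => d j + c := by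
  ext i j
  simp [Matrix.add_mul, h, mul_add, mul_comm]

lemma fromBlocks_mul_fromBlocks_neg [CommRing R] {P Q H : Matrix ι ι R} {p q : ι → R}
    (hP : P * H = H * diagonal p) (hQ : Q * H = H * diagonal q) :
    fromBlocks P Q Q P * fromBlocks H H H (-H) =
      fromBlocks H H H (-H) * diagonal (Sum.elim (p + q) (p - q)) := by
  rw [← fromBlocks_diagonal, fromBlocks_multiply, fromBlocks_multiply]
  simp only [Matrix.mul_neg, Matrix.neg_mul, hP, hQ, Matrix.mul_zero, add_zero, zero_add]
  congr 1 <;> ext i j <;>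
    simp only [Matrix.add_apply, Matrix.neg_apply, mul_diagonal, Pi.add_apply, Pi.sub_apply] <;>
    ring

lemma exp_smul_mulVec_eq_iff {M U : Matrix ι ι ℂ} {d : ι → ℂ} (hU : IsUnit U)
    (hMU : M * U = U * diagonal d) (t : ℂ) (v w : ι → ℂ) :
    NormedSpace.exp (t • M) *ᵥ v = w ↔
      ∀ k, Complex.exp (t * d k) * (U⁻¹ *ᵥ v) k = (U⁻¹ *ᵥ w) k := by
  have hdet : IsUnit U.det := (isUnit_iff_isUnit_det U).mp hU
  have hM : t • M = U * diagonal (t • d) * U⁻¹ := by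
    rw [diagonal_smul, Matrix.mul_smul, Matrix.smul_mul, ← hMU,
      mul_nonsing_inv_cancel_right U M hdet]
  have hexp : NormedSpace.exp (t • d) = fun k => Complex.exp (t * d k) := by
    funext k
    simp [Pi.coe_exp, Complex.exp_eq_exp_ℂ]
  have hw : U *ᵥ (U⁻¹ *ᵥ w) = w := by rw [mulVec_mulVec, mul_nonsing_inv U hdet, one_mulVec]
  rw [hM, Matrix.exp_conj _ _ hU, Matrix.exp_diagonal, hexp, ← mulVec_mulVec, ← mulVec_mulVec,
    (mulVec_injective_iff_isUnit.mpr hU).eq_iff' hw, funext_iff]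
  simp only [mulVec_diagonal]

lemma fromBlocks_neg_mul_conjTranspose [CommRing R] [StarRing R] {H : Matrix ι ι R} {c : R}
    (hH : H * Hᴴ = c • 1) :
    fromBlocks H H H (-H) * (fromBlocks H H H (-H))ᴴ = (2 * c) • 1 := by
  rw [fromBlocks_conjTranspose, fromBlocks_multiply, ← fromBlocks_one, fromBlocks_smul]
  simp only [conjTranspose_neg, Matrix.mul_neg, Matrix.neg_mul, neg_neg, hH, add_neg_cancel,
    smul_zero, two_mul, add_smul]

lemma exp_smul_mulVec_single_eq_iff_of_fromBlocks {H : Matrix ι ι ℂ}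
    {M : Matrix (ι ⊕ ι) (ι ⊕ ι) ℂ} {c : ℂ} {p q : ι → ℂ}
    (hH : H * Hᴴ = c • 1) (hc : c ≠ 0)
    (hM : M * fromBlocks H H H (-H) = fromBlocks H H H (-H) * diagonal (Sum.elim p q))
    {a : ι} (ha : ∀ j, H a j ≠ 0) (t α β : ℂ) :
    NormedSpace.exp (t • M) *ᵥ Pi.single (Sum.inl a) 1 =
        α • Pi.single (Sum.inl a) 1 + β • Pi.single (Sum.inr a) 1 ↔
      ∀ j, Complex.exp (t * p j) = α + β ∧ Complex.exp (t * q j) = α - β := by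
  set U := fromBlocks H H H (-H)
  have hright : U * ((2 * c)⁻¹ • Uᴴ) = 1 := by
    rw [Matrix.mul_smul, fromBlocks_neg_mul_conjTranspose hH, smul_smul,
      inv_mul_cancel₀ (mul_ne_zero two_ne_zero hc), one_smul]
  have hU : IsUnit U := (isUnit_iff_isUnit_det U).mpr (isUnit_det_of_right_inverse hright)
  rw [exp_smul_mulVec_eq_iff hU hM, inv_eq_right_inv hright, Sum.forall, ← forall_and]
  refine forall_congr' fun j => ?_
  have hw : (2 * c)⁻¹ * star (H a j) ≠ 0 :=
    mul_ne_zero (inv_ne_zero (mul_ne_zero two_ne_zero hc)) (star_ne_zero.mpr (ha j))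
  simp only [U, mulVec_add, mulVec_smul, mulVec_single_one, Pi.add_apply, Pi.smul_apply,
    smul_eq_mul, col_apply, Matrix.smul_apply, fromBlocks_conjTranspose, fromBlocks_apply₁₁,
    fromBlocks_apply₁₂, fromBlocks_apply₂₁, fromBlocks_apply₂₂, conjTranspose_neg,
    Matrix.neg_apply, Sum.elim_inl, Sum.elim_inr, conjTranspose_apply]
  rw [← add_mul, mul_neg, mul_neg, ← sub_eq_add_neg, ← sub_mul, mul_left_inj' hw, mul_left_inj' hw]

end Diagonalisation

section Laplacian

variable {n : ℕ}

lemma lapOf_map_ofReal_eq_smul_one_sub {A : Matrix (Fin n) (Fin n) ℝ} {d : ℝ}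
    (h : ∀ i, ∑ j, A i j = d) : (lapOf A).map ofReal = (d : ℂ) • 1 - A.map ofReal := by
  ext i j
  by_cases hij : i = j <;> simp [lapOf, one_apply, hij, h]

lemma sum_lapOf_apply (A : Matrix (Fin n) (Fin n) ℝ) (i : Fin n) : ∑ j, lapOf A i j = 0 := by
  simp [lapOf, Matrix.sub_apply, diagonal_apply, Finset.sum_sub_distrib]

lemma eq_zero_of_lapOf_map_ofReal_mulVec_const [NeZero n] {A : Matrix (Fin n) (Fin n) ℝ}
    {v : Fin n → ℂ} (hv : ∀ i, v i = 1) {c : ℝ} (h : (lapOf A).map ofReal *ᵥ v = (c : ℂ) • v) :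
    c = 0 := by
  have h0 := congrFun h 0
  simp only [mulVec, dotProduct, map_apply, hv, mul_one, Pi.smul_apply, smul_eq_mul,
    ← ofReal_sum, sum_lapOf_apply] at h0
  exact_mod_cast h0.symm

end Laplacian

lemma exp_ofReal_mul_I_eq_one_iff (x : ℝ) :
    Complex.exp (x * I) = 1 ↔ ∃ z : ℤ, x = 2 * Real.pi * z := by
  rw [exp_eq_one_iff]
  refine exists_congr fun z => ⟨fun h => ?_, fun h => ?_⟩
  · have := congrArg im h
    simp at this
    linarith
  · rw [h]; push_cast; ring

lemma exp_neg_ofReal_mul_I_eq_one_iff (x : ℝ) :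
    Complex.exp (-(x * I)) = 1 ↔ ∃ z : ℤ, x = 2 * Real.pi * z := by
  rw [exp_neg, inv_eq_one, exp_ofReal_mul_I_eq_one_iff]

lemma exp_two_mul_ofReal_mul_I_eq_iff (x y : ℝ) :
    Complex.exp (2 * x * I) = Complex.exp (2 * y * I) ↔ ∃ z : ℤ, x = y + z * Real.pi := by
  rw [exp_eq_exp_iff_exp_sub_eq_one,
    show 2 * (x : ℂ) * I - 2 * y * I = ((2 * (x - y) : ℝ) : ℂ) * I by push_cast; ring,
    exp_ofReal_mul_I_eq_one_iff]
  refine exists_congr fun z => ⟨fun h => by linarith, fun h => by linarith⟩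

lemma exp_mul_I_mul_cos_add_neg_I_mul_sin (γ : ℝ) :
    Complex.exp (γ * I) * Real.cos γ + -I * Complex.exp (γ * I) * Real.sin γ = 1 := by
  rw [ofReal_cos, ofReal_sin, exp_mul_I]
  linear_combination Complex.sin_sq_add_cos_sq (γ : ℂ) - Complex.sin (γ : ℂ) ^ 2 * I_sq

lemma exp_mul_I_mul_cos_sub_neg_I_mul_sin (γ : ℝ) :
    Complex.exp (γ * I) * Real.cos γ - -I * Complex.exp (γ * I) * Real.sin γ =
      Complex.exp (2 * γ * I) := by
  rw [ofReal_cos, ofReal_sin, exp_mul_I, exp_mul_I, cos_two_mul, sin_two_mul]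
  linear_combination -Complex.sin_sq_add_cos_sq (γ : ℂ) + Complex.sin (γ : ℂ) ^ 2 * I_sq

lemma forall_exp_add_eq_iff {ι : Type*} {f : ι → ℂ} {i₀ : ι} (hf : f i₀ = 0) (c w : ℂ) :
    (∀ j, Complex.exp (f j + c) = Complex.exp w) ↔
      Complex.exp w = Complex.exp c ∧ ∀ j, Complex.exp (f j) = 1 := by
  refine ⟨fun h => ?_, fun h j => by rw [exp_add, h.2 j, one_mul, h.1]⟩
  have hc : Complex.exp c = Complex.exp w := by simpa [hf] using h i₀
  refine ⟨hc.symm, fun j => ?_⟩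
  have hj := h j
  rwa [exp_add, ← hc, mul_eq_right₀ (exp_ne_zero c)] at hj

theorem stmt18_general {n : ℕ} [NeZero n]
    (H : Matrix (Fin n) (Fin n) ℂ) (hH : IsCHadamard H) (hd : IsDephased H)
    (A₁ A₂ : Matrix (Fin n) (Fin n) ℝ)
    (lam mu : Fin n → ℝ)
    (hlam : ∀ j, ((lapOf A₁).map Complex.ofReal).mulVec (fun i => H i j)
      = (lam j : ℂ) • (fun i => H i j))
    (hmu : ∀ j, ((lapOf A₂).map Complex.ofReal).mulVec (fun i => H i j)
      = (mu j : ℂ) • (fun i => H i j))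
    (d₂ : ℝ) (hreg : ∀ i, ∑ j, A₂ i j = d₂)
    (Lbig : Matrix (Fin n ⊕ Fin n) (Fin n ⊕ Fin n) ℂ)
    (hLbig : Lbig = Matrix.fromBlocks
      ((lapOf A₁).map Complex.ofReal + (d₂ : ℂ) • (1 : Matrix (Fin n) (Fin n) ℂ))
      (-(A₂.map Complex.ofReal)) (-(A₂.map Complex.ofReal))
      ((lapOf A₁).map Complex.ofReal + (d₂ : ℂ) • (1 : Matrix (Fin n) (Fin n) ℂ)))
    (a : Fin n) (τ γ : ℝ) :
    ((NormedSpace.exp ((-(Complex.I * (τ : ℂ))) • Lbig)).mulVec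
        (Pi.single (Sum.inl a) 1 : Fin n ⊕ Fin n → ℂ)
      = (Complex.exp (γ * Complex.I) * Real.cos γ) •
          (Pi.single (Sum.inl a) 1 : Fin n ⊕ Fin n → ℂ)
        + (-Complex.I * Complex.exp (γ * Complex.I) * Real.sin γ) •
          (Pi.single (Sum.inr a) 1 : Fin n ⊕ Fin n → ℂ)) ↔
      ((∃ z : ℤ, γ = -d₂ * τ + z * Real.pi) ∧
        ∀ j : Fin n, (∃ z : ℤ, τ * (lam j + mu j) = 2 * Real.pi * z) ∧
          (∃ z : ℤ, τ * (lam j - mu j) = 2 * Real.pi * z)) := by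
  obtain ⟨hunimodular, hgram⟩ := hH
  have hP := add_smul_one_mul_eq_mul_diagonal (mul_eq_mul_diagonal_of_mulVec_col_s18 hlam) (d₂ : ℂ)
  have hQ := add_smul_one_mul_eq_mul_diagonal (mul_eq_mul_diagonal_of_mulVec_col_s18 hmu) (-d₂ : ℂ)
  rw [lapOf_map_ofReal_eq_smul_one_sub hreg, neg_smul, ← sub_eq_add_neg, sub_sub_cancel_left] at hQ
  have hlam0 := eq_zero_of_lapOf_map_ofReal_mulVec_const hd.1 (hlam 0)
  have hmu0 := eq_zero_of_lapOf_map_ofReal_mulVec_const hd.1 (hmu 0)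
  rw [exp_smul_mulVec_single_eq_iff_of_fromBlocks (by simpa using hgram)
    (Nat.cast_ne_zero.mpr (NeZero.ne n)) (hLbig ▸ fromBlocks_mul_fromBlocks_neg hP hQ)
    (fun j => norm_ne_zero_iff.mp (by simp [hunimodular])),
    exp_mul_I_mul_cos_add_neg_I_mul_sin, exp_mul_I_mul_cos_sub_neg_I_mul_sin]
  have hsum : ∀ j, -(I * τ) * ((fun j => (lam j : ℂ) + d₂) + fun j => (mu j : ℂ) + -d₂) j =
      -(((τ * (lam j + mu j) : ℝ) : ℂ) * I) := fun j => by
    simp only [Pi.add_apply]; push_cast; ring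
  have hdiff : ∀ j, -(I * τ) * ((fun j => (lam j : ℂ) + d₂) - fun j => (mu j : ℂ) + -d₂) j =
      -(((τ * (lam j - mu j) : ℝ) : ℂ) * I) + 2 * ((-d₂ * τ : ℝ) : ℂ) * I := fun j => by
    simp only [Pi.sub_apply]; push_cast; ring
  simp only [hsum, hdiff, forall_and]
  rw [forall_exp_add_eq_iff (i₀ := 0) (by simp [hlam0, hmu0]), exp_two_mul_ofReal_mul_I_eq_iff]
  simp only [exp_neg_ofReal_mul_I_eq_one_iff]
  tauto

/-- Fractional revival on the double cover `G1 ⋉ G2`: with both Laplacians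
diagonalised by the same dephased complex Hadamard matrix `H`
(`L(G1)h_j = λ_j h_j`, `L(G2)h_j = μ_j h_j`) and `G2` regular of degree `d2`,
the double cover has `(e^{iγ}cos γ, −i e^{iγ}sin γ)`-Laplacian fractional
revival from `(a,0)` to `(a,1)` at time `τ` iff `γ ≡ −d2 τ (mod π)` and
`τ(λ_j + μ_j) ≡ τ(λ_j − μ_j) ≡ 0 (mod 2π)` for all `j`. -/
theorem stmt18 {n : ℕ} [NeZero n]
    (H : Matrix (Fin n) (Fin n) ℂ) (hH : IsCHadamard H) (hd : IsDephased H)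
    (A₁ A₂ : Matrix (Fin n) (Fin n) ℝ)
    (hs₁ : A₁.IsSymm) (hs₂ : A₂.IsSymm)
    (hn₁ : ∀ i j, 0 ≤ A₁ i j) (hn₂ : ∀ i j, 0 ≤ A₂ i j)
    (hd₁ : ∀ i, A₁ i i = 0) (hd₂ : ∀ i, A₂ i i = 0)
    (lam mu : Fin n → ℝ)
    (hlam : ∀ j, ((lapOf A₁).map Complex.ofReal).mulVec (fun i => H i j)
      = (lam j : ℂ) • (fun i => H i j))
    (hmu : ∀ j, ((lapOf A₂).map Complex.ofReal).mulVec (fun i => H i j)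
      = (mu j : ℂ) • (fun i => H i j))
    (d₂ : ℝ) (hreg : ∀ i, ∑ j, A₂ i j = d₂)
    (Lbig : Matrix (Fin n ⊕ Fin n) (Fin n ⊕ Fin n) ℂ)
    (hLbig : Lbig = Matrix.fromBlocks
      ((lapOf A₁).map Complex.ofReal + (d₂ : ℂ) • (1 : Matrix (Fin n) (Fin n) ℂ))
      (-(A₂.map Complex.ofReal)) (-(A₂.map Complex.ofReal))
      ((lapOf A₁).map Complex.ofReal + (d₂ : ℂ) • (1 : Matrix (Fin n) (Fin n) ℂ)))
    (a : Fin n) (τ γ : ℝ) (hβ : Real.sin γ ≠ 0) :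
    ((NormedSpace.exp ((-(Complex.I * (τ : ℂ))) • Lbig)).mulVec
        (Pi.single (Sum.inl a) 1 : Fin n ⊕ Fin n → ℂ)
      = (Complex.exp (γ * Complex.I) * Real.cos γ) •
          (Pi.single (Sum.inl a) 1 : Fin n ⊕ Fin n → ℂ)
        + (-Complex.I * Complex.exp (γ * Complex.I) * Real.sin γ) •
          (Pi.single (Sum.inr a) 1 : Fin n ⊕ Fin n → ℂ)) ↔
      ((∃ z : ℤ, γ = -d₂ * τ + z * Real.pi) ∧
        ∀ j : Fin n, (∃ z : ℤ, τ * (lam j + mu j) = 2 * Real.pi * z) ∧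
          (∃ z : ℤ, τ * (lam j - mu j) = 2 * Real.pi * z)) :=
  stmt18_general H hH hd A₁ A₂ lam mu hlam hmu d₂ hreg Lbig hLbig a τ γ
end
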